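/- Let Σ be a signed simple graph and κ a minimal proper coloration of Σ. Then there exists a coloration κ* switching equivalent to κ with def(κ*) = ⌊χ(Σ)/2⌋; in particular the maximum switching deficiency M*(Σ) equals ⌊χ(Σ)/2⌋. -/

import Mathlib

/-- A signed simple graph: two edge-disjoint simple graphs on the same vertex set,
the positive edges and the negative edges. -/
structure SignedGraph (V : Type*) where
  pos : SimpleGraph V
  neg : SimpleGraph V
  disjoint : ∀ a b : V, ¬ (pos.Adj a b ∧ neg.Adj a b)

/-- The color set of size `n`: `{±1, …, ±k}` if `n = 2k`, and `{0, ±1, …, ±k}` if `n = 2k+1`. -/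
noncomputable def signedColorSet (n : ℕ) : Finset ℤ :=
  if Even n then (Finset.Icc (-((n / 2 : ℕ) : ℤ)) ((n / 2 : ℕ) : ℤ)).erase 0
  else Finset.Icc (-((n / 2 : ℕ) : ℤ)) ((n / 2 : ℕ) : ℤ)

/-- A proper coloration of a signed graph using the color set of size `n`. -/
def IsProperColoration {V : Type*} (S : SignedGraph V) (n : ℕ) (κ : V → ℤ) : Prop :=
  (∀ v, κ v ∈ signedColorSet n) ∧
  (∀ a b, S.pos.Adj a b → κ a ≠ κ b) ∧
  (∀ a b, S.neg.Adj a b → κ a ≠ -κ b)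

/-- The chromatic number: the least size of a color set admitting a proper coloration. -/
noncomputable def sChromaticNumber {V : Type*} (S : SignedGraph V) : ℕ :=
  sInf {n : ℕ | ∃ κ : V → ℤ, IsProperColoration S n κ}

/-- A minimal coloration: a proper coloration using the color set of size `χ(Σ)`. -/
def IsMinimalColoration {V : Type*} (S : SignedGraph V) (κ : V → ℤ) : Prop :=
  IsProperColoration S (sChromaticNumber S) κ

/-- The deficiency of a coloration: the number of unused colors from the color set of size `n`. -/
noncomputable def sDeficiency {V : Type*} [Fintype V] (n : ℕ) (κ : V → ℤ) : ℕ :=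
  (signedColorSet n \ Finset.image κ Finset.univ).card

/-- Maximum deficiency over minimal colorations. -/
noncomputable def maxDef {V : Type*} [Fintype V] (S : SignedGraph V) : ℕ :=
  sSup {d : ℕ | ∃ κ : V → ℤ, IsMinimalColoration S κ ∧ sDeficiency (sChromaticNumber S) κ = d}

/-- Minimum deficiency over minimal colorations. -/
noncomputable def minDef {V : Type*} [Fintype V] (S : SignedGraph V) : ℕ :=
  sInf {d : ℕ | ∃ κ : V → ℤ, IsMinimalColoration S κ ∧ sDeficiency (sChromaticNumber S) κ = d}

/-- A stable cover of the positive edges: a vertex cover of `E⁺` that is stable in `Σ`. -/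
def IsStableCover {V : Type*} (S : SignedGraph V) (T : Set V) : Prop :=
  (∀ a b, S.pos.Adj a b → a ∈ T ∨ b ∈ T) ∧
  (∀ a ∈ T, ∀ b ∈ T, ¬ S.pos.Adj a b ∧ ¬ S.neg.Adj a b)

/-- An edge `ab` has exactly one endpoint in `A`. -/
def crossing {V : Type*} (A : Set V) (a b : V) : Prop := ¬ ((a ∈ A) ↔ (b ∈ A))

/-- Switching a signed graph at a vertex set `A`: the sign of every edge with exactly one
endpoint in `A` is negated. -/
def SignedGraph.switch {V : Type*} (S : SignedGraph V) (A : Set V) : SignedGraph V where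
  pos :=
    { Adj := fun a b => (S.pos.Adj a b ∧ ¬ crossing A a b) ∨ (S.neg.Adj a b ∧ crossing A a b)
      symm := by
        refine ⟨fun a b h => ?_⟩
        unfold crossing at *
        rcases h with ⟨h1, h2⟩ | ⟨h1, h2⟩
        · exact Or.inl ⟨S.pos.adj_symm h1, by tauto⟩
        · exact Or.inr ⟨S.neg.adj_symm h1, by tauto⟩
      loopless := by
        refine ⟨fun a h => ?_⟩
        rcases h with ⟨h1, _⟩ | ⟨_, h2⟩
        · exact S.pos.irrefl h1
        · exact h2 Iff.rfl }
  neg :=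
    { Adj := fun a b => (S.neg.Adj a b ∧ ¬ crossing A a b) ∨ (S.pos.Adj a b ∧ crossing A a b)
      symm := by
        refine ⟨fun a b h => ?_⟩
        unfold crossing at *
        rcases h with ⟨h1, h2⟩ | ⟨h1, h2⟩
        · exact Or.inl ⟨S.neg.adj_symm h1, by tauto⟩
        · exact Or.inr ⟨S.pos.adj_symm h1, by tauto⟩
      loopless := by
        refine ⟨fun a h => ?_⟩
        rcases h with ⟨h1, _⟩ | ⟨_, h2⟩
        · exact S.neg.irrefl h1
        · exact h2 Iff.rfl }
  disjoint := by
    intro a b h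
    have := S.disjoint a b
    tauto

/-- General proper coloration with an arbitrary color set `C ⊆ ℤ`. -/
def IsProperWith {V : Type*} (S : SignedGraph V) (C : Set ℤ) (κ : V → ℤ) : Prop :=
  (∀ v, κ v ∈ C) ∧
  (∀ a b, S.pos.Adj a b → κ a ≠ κ b) ∧
  (∀ a b, S.neg.Adj a b → κ a ≠ -κ b)

open Classical in
/-- The coloration switching equivalent to `κ` via `A`: negate the colors on `A`. -/
noncomputable def switchColor {V : Type*} (A : Set V) (κ : V → ℤ) : V → ℤ :=
  fun v => if v ∈ A then -κ v else κ v

/-- The adjacency of the forcing graph `F(Σ)` for the matching `m`: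
a directed edge from `x` to `y` whenever `x ȳ` is a negative edge. -/
def ForcingAdj {V : Type*} (S : SignedGraph V) (m : V → V) (x y : V) : Prop :=
  S.neg.Adj x (m y)


/-- The maximum switching deficiency `M*(Σ)`. -/
noncomputable def maxSwitchDef {V : Type*} [Fintype V] (S : SignedGraph V) : ℕ :=
  sSup {d : ℕ | ∃ (κ : V → ℤ) (A : Set V), IsMinimalColoration S κ ∧
    sDeficiency (sChromaticNumber S) (switchColor A κ) = d}


/-!
A minimal coloration `κ` uses a color of absolute value `j` for every nonnegative color `j`:
otherwise renaming the colors `±⌊χ/2⌋` to `±j` (or, for `j = 0`, dropping the color `0`) gives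
a proper coloration with fewer colors. Switching does not change `|κ|`, so every coloration
switching equivalent to `κ` uses at least as many colors as there are nonnegative ones and
misses at most the `⌊χ/2⌋` others. Switching at the negatively colored vertices turns `κ`
into `|κ|`, which misses exactly the `⌊χ/2⌋` negative colors.
-/

open Finset Function

section ColorSet

lemma mem_signedColorSet {n : ℕ} {c : ℤ} :
    c ∈ signedColorSet n ↔ -((n / 2 : ℕ) : ℤ) ≤ c ∧ c ≤ (n / 2 : ℕ) ∧ (Even n → c ≠ 0) := by
  unfold signedColorSet
  split_ifs with h
  · simp only [h, mem_erase, mem_Icc, forall_const]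
    tauto
  · simp only [h, mem_Icc, IsEmpty.forall_iff, and_true]

lemma neg_mem_signedColorSet {n : ℕ} {c : ℤ} (hc : c ∈ signedColorSet n) :
    -c ∈ signedColorSet n := by
  rw [mem_signedColorSet, Nat.even_iff] at hc ⊢
  omega

lemma abs_mem_signedColorSet {n : ℕ} {c : ℤ} (hc : c ∈ signedColorSet n) :
    |c| ∈ signedColorSet n := by
  rcases abs_choice c with h | h <;> rw [h]
  exacts [hc, neg_mem_signedColorSet hc]

lemma card_signedColorSet_sub_card_filter_nonneg (n : ℕ) :
    #(signedColorSet n) - #((signedColorSet n).filter (0 ≤ ·)) = n / 2 := by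
  have hneg : (signedColorSet n).filter (¬ 0 ≤ ·) = Icc (-((n / 2 : ℕ) : ℤ)) (-1) := by
    ext c
    simp only [mem_filter, mem_signedColorSet, mem_Icc, Nat.even_iff]
    constructor <;> omega
  rw [← card_sdiff_of_subset (filter_subset _ _), ← filter_not, hneg, Int.card_Icc]
  omega

end ColorSet

section Recoloring

variable {V : Type*} {S : SignedGraph V} {n m : ℕ} {κ : V → ℤ}

lemma IsProperColoration.comp_of_odd (hκ : IsProperColoration S n κ) {f : ℤ → ℤ}
    (hf : Injective f) (hodd : ∀ c, f (-c) = -f c) (hmem : ∀ v, f (κ v) ∈ signedColorSet m) :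
    IsProperColoration S m (f ∘ κ) := by
  refine ⟨hmem, fun a b hab h => hκ.2.1 a b hab (hf h), fun a b hab h => ?_⟩
  exact hκ.2.2 a b hab (hf (h.trans (hodd _).symm))

lemma IsProperColoration.exists_lt_of_abs_ne (hκ : IsProperColoration S n κ) {j : ℤ}
    (hj : 0 ≤ j) (hjC : j ∈ signedColorSet n) (hne : ∀ v, |κ v| ≠ j) :
    ∃ m < n, ∃ κ' : V → ℤ, IsProperColoration S m κ' := by
  have hbd := fun v => mem_signedColorSet.mp (hκ.1 v)
  simp only [mem_signedColorSet, Nat.even_iff] at hbd hjC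
  have hpm : ∀ v, κ v ≠ j ∧ κ v ≠ -j := fun v => by simpa [abs_eq hj, not_or] using hne v
  obtain ⟨hjl, hjr, hjz⟩ := hjC
  rcases hj.eq_or_lt with rfl | hjpos
  · obtain ⟨k, rfl⟩ : ∃ k, n = 2 * k + 1 := ⟨n / 2, by omega⟩
    refine ⟨2 * k, by omega, κ, fun v => ?_, hκ.2⟩
    have := hbd v; have := hpm v
    rw [mem_signedColorSet, Nat.even_iff]
    omega
  · set k : ℤ := ((n / 2 : ℕ) : ℤ) with hk
    let f : Equiv.Perm ℤ := Equiv.swap j k * Equiv.swap (-j) (-k)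
    have hf : ∀ c, f c = if c = j then k else if c = k then j else
        if c = -j then -k else if c = -k then -j else c := by
      intro c
      simp only [f, Equiv.Perm.mul_apply, Equiv.swap_apply_def]
      split_ifs <;> omega
    have hodd : ∀ c, f (-c) = -f c := by
      intro c
      rw [hf, hf]
      split_ifs <;> omega
    refine ⟨n - 2, by omega, f ∘ κ, hκ.comp_of_odd f.injective hodd fun v => ?_⟩
    have := hbd v; have := hpm v
    rw [mem_signedColorSet, Nat.even_iff, hf]
    split_ifs <;> omega

end Recoloring

section Minimal

variable {V : Type*} {S : SignedGraph V} {κ : V → ℤ}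

lemma sChromaticNumber_le {n : ℕ} (hκ : IsProperColoration S n κ) : sChromaticNumber S ≤ n :=
  Nat.sInf_le ⟨κ, hκ⟩

lemma IsMinimalColoration.exists_abs_eq (hκ : IsMinimalColoration S κ) {j : ℤ} (hj : 0 ≤ j)
    (hjC : j ∈ signedColorSet (sChromaticNumber S)) : ∃ v, |κ v| = j := by
  by_contra! hne
  obtain ⟨m, hm, κ', hκ'⟩ := IsProperColoration.exists_lt_of_abs_ne hκ hj hjC hne
  exact (sChromaticNumber_le hκ').not_gt hm

lemma IsMinimalColoration.image_abs [Fintype V] (hκ : IsMinimalColoration S κ) :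
    univ.image (fun v => |κ v|) = (signedColorSet (sChromaticNumber S)).filter (0 ≤ ·) := by
  ext c
  simp only [mem_image, mem_univ, true_and, mem_filter]
  constructor
  · rintro ⟨v, rfl⟩
    exact ⟨abs_mem_signedColorSet (hκ.1 v), abs_nonneg _⟩
  · rintro ⟨hcC, hc⟩
    exact hκ.exists_abs_eq hc hcC

end Minimal

section Switching

variable {V : Type*} (A : Set V) (κ : V → ℤ)

lemma abs_switchColor (v : V) : |switchColor A κ v| = |κ v| := by
  unfold switchColor
  split_ifs <;> simp

lemma switchColor_mem_signedColorSet {n : ℕ} (hκ : ∀ v, κ v ∈ signedColorSet n) (v : V) :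
    switchColor A κ v ∈ signedColorSet n := by
  unfold switchColor
  split_ifs
  exacts [neg_mem_signedColorSet (hκ v), hκ v]

lemma switchColor_setOf_neg : switchColor {v | κ v < 0} κ = fun v => |κ v| := by
  funext v
  unfold switchColor
  split_ifs with h
  exacts [(abs_of_neg h).symm, (abs_of_nonneg (not_lt.mp h)).symm]

end Switching

section Deficiency

variable {V : Type*} [Fintype V] {S : SignedGraph V} {κ : V → ℤ}

lemma sDeficiency_eq_card_sub {n : ℕ} (hκ : ∀ v, κ v ∈ signedColorSet n) :
    sDeficiency n κ = #(signedColorSet n) - #(univ.image κ) := by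
  rw [sDeficiency, card_sdiff_of_subset]
  simpa [subset_iff] using hκ

lemma IsMinimalColoration.sDeficiency_switchColor_le (hκ : IsMinimalColoration S κ)
    (A : Set V) : sDeficiency (sChromaticNumber S) (switchColor A κ) ≤ sChromaticNumber S / 2 := by
  have hcard : #(univ.image fun v => |κ v|) ≤ #(univ.image (switchColor A κ)) :=
    calc #(univ.image fun v => |κ v|) = #((univ.image (switchColor A κ)).image abs) := by
          simp only [image_image, comp_def, abs_switchColor]
      _ ≤ _ := card_image_le
  rw [sDeficiency_eq_card_sub (switchColor_mem_signedColorSet A κ hκ.1),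
    ← card_signedColorSet_sub_card_filter_nonneg, ← hκ.image_abs]
  omega

lemma IsMinimalColoration.sDeficiency_switchColor_setOf_neg (hκ : IsMinimalColoration S κ) :
    sDeficiency (sChromaticNumber S) (switchColor {v | κ v < 0} κ) = sChromaticNumber S / 2 := by
  rw [sDeficiency_eq_card_sub (switchColor_mem_signedColorSet _ κ hκ.1), switchColor_setOf_neg,
    hκ.image_abs, card_signedColorSet_sub_card_filter_nonneg]

end Deficiency

/-- Every minimal coloration is switching equivalent to one of
deficiency `⌊χ(Σ)/2⌋`; in particular `M*(Σ) = ⌊χ(Σ)/2⌋`. -/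
theorem max_switching_deficiency {V : Type*} [Fintype V] (S : SignedGraph V)
    (κ : V → ℤ) (hκ : IsMinimalColoration S κ) :
    (∃ A : Set V,
        sDeficiency (sChromaticNumber S) (switchColor A κ) = sChromaticNumber S / 2) ∧
      maxSwitchDef S = sChromaticNumber S / 2 := by
  have hneg := hκ.sDeficiency_switchColor_setOf_neg
  refine ⟨⟨_, hneg⟩, IsGreatest.csSup_eq ⟨⟨κ, _, hκ, hneg⟩, ?_⟩⟩
  rintro _ ⟨κ', A, hκ', rfl⟩
  exact hκ'.sDeficiency_switchColor_le A
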